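/- Set Q = 1 − q² and define the F-linear maps X₀ = A_L, X₁ = Q(A*_ℓ − B*_r K), X₂ = B_L, X₃ = Q(B*_ℓ − A*_r K⁻¹) on V. Then for each i ∈ ℤ₄ (indices mod 4), (q·X_i X_{i+1} − q⁻¹·X_{i+1} X_i)/(q − q⁻¹) = I on V; moreover X₁ and X₃ satisfy the q-Serre relations: X₁³X₃ − [3]_q X₁²X₃X₁ + [3]_q X₁X₃X₁² − X₃X₁³ = 0 and X₃³X₁ − [3]_q X₃²X₁X₃ + [3]_q X₃X₁X₃² − X₁X₃³ = 0. -/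

import Mathlib

noncomputable section
namespace SqPaper

/-- The two letters: `0 ↦ A`, `1 ↦ B`. -/
abbrev Ltr := Fin 2
def lA : Ltr := 0
def lB : Ltr := 1

/-- The pairing `⟨ , ⟩` on letters: `⟨A,A⟩=⟨B,B⟩=2`, `⟨A,B⟩=⟨B,A⟩=-2`. -/
def brk (x y : Ltr) : ℤ := if x = y then 2 else -2

variable (F : Type*) [Field F]

/-- The free algebra `V` on the two generators, realized as the monoid algebra of the
free monoid on two letters; the words form the standard basis. -/
abbrev FA := MonoidAlgebra F (FreeMonoid Ltr)

/-- The standard basis vector attached to a word (list of letters). -/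
def wd (l : List Ltr) : FA F := MonoidAlgebra.single (FreeMonoid.ofList l) 1

def Agen : FA F := wd F [lA]
def Bgen : FA F := wd F [lB]

/-- View an element of `V` as a finitely supported function on words. -/
def fsp (v : FA F) : FreeMonoid Ltr →₀ F := v.coeff

/-- The symmetric bilinear form on `V` for which the standard basis of words is orthonormal. -/
def form (u v : FA F) : F := (fsp F u).sum fun w c => c * (fsp F v) w

/-- Extend a function on words to an `F`-linear map on `V`. -/
def mkMap {M : Type*} [AddCommMonoid M] [Module F M] (f : List Ltr → M) :
    FA F →ₗ[F] M :=
  Finsupp.lsum F (fun w => LinearMap.toSpanSingleton F M (f (FreeMonoid.toList w)))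
    ∘ₗ (MonoidAlgebra.coeffLinearEquiv F).toLinearMap

/-- `[3]_q = (q³ - q⁻³)/(q - q⁻¹)`. -/
def tri (q : F) : F := (q ^ 3 - q⁻¹ ^ 3) / (q - q⁻¹)

/-- The q-shuffle product on words. -/
def shufW (q : F) : List Ltr → List Ltr → FA F
  | [], v => wd F v
  | u, [] => wd F u
  | a :: u, b :: v =>
      wd F [a] * shufW q u (b :: v) +
        (q ^ (((a :: u).map (fun x => brk x b)).sum)) • (wd F [b] * shufW q (a :: u) v)
  termination_by u v => u.length + v.length

/-- The q-shuffle product `⋆` on `V`, as a bilinear map. -/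
def qshuf (q : F) : FA F →ₗ[F] FA F →ₗ[F] FA F :=
  mkMap F fun u => mkMap F fun v => shufW F q u v

/-- Iterated `⋆`-product of the letters of a word. -/
def thetaW (q : F) : List Ltr → FA F
  | [] => 1
  | a :: t => qshuf F q (wd F [a]) (thetaW q t)

/-- `θ : V → V`, the algebra homomorphism from the free algebra to the q-shuffle algebra
with `θ(A) = A`, `θ(B) = B`. -/
def theta (q : F) : FA F →ₗ[F] FA F := mkMap F fun l => thetaW F q l

/-- `A_L`, left multiplication by `A` in the free algebra. -/
def AL : FA F →ₗ[F] FA F := LinearMap.mulLeft F (Agen F)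
def BL : FA F →ₗ[F] FA F := LinearMap.mulLeft F (Bgen F)
def AR : FA F →ₗ[F] FA F := LinearMap.mulRight F (Agen F)
def BR : FA F →ₗ[F] FA F := LinearMap.mulRight F (Bgen F)

/-- `X*_L` (for the letter `x`): deletes the letter `x` from the front of a word. -/
def delL (x : Ltr) : FA F →ₗ[F] FA F :=
  mkMap F fun l => if l.head? = some x then wd F l.tail else 0

/-- `X*_R` (for the letter `x`): deletes the letter `x` from the end of a word. -/
def delR (x : Ltr) : FA F →ₗ[F] FA F :=
  mkMap F fun l => if l.getLast? = some x then wd F l.dropLast else 0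

/-- `X_ℓ`: left q-shuffle multiplication by the letter `x`. -/
def shL (q : F) (x : Ltr) : FA F →ₗ[F] FA F := qshuf F q (wd F [x])

/-- `X_r`: right q-shuffle multiplication by the letter `x`. -/
def shR (q : F) (x : Ltr) : FA F →ₗ[F] FA F := (qshuf F q).flip (wd F [x])

/-- `X*_ℓ`: the weighted deletion map, deleting an occurrence of the letter `x`
with weight `q^{⟨v₁,x⟩+⋯+⟨v_{i-1},x⟩}`. -/
def lowL (q : F) (x : Ltr) : FA F →ₗ[F] FA F :=
  mkMap F fun l =>
    ∑ i ∈ Finset.range l.length,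
      if l[i]? = some x then
        (q ^ (((l.take i).map (fun y => brk y x)).sum)) • wd F (l.eraseIdx i)
      else 0

/-- `X*_r`: the weighted deletion map, deleting an occurrence of the letter `x`
with weight `q^{⟨vₙ,x⟩+⋯+⟨v_{i+1},x⟩}`. -/
def lowR (q : F) (x : Ltr) : FA F →ₗ[F] FA F :=
  mkMap F fun l =>
    ∑ i ∈ Finset.range l.length,
      if l[i]? = some x then
        (q ^ (((l.drop (i + 1)).map (fun y => brk y x)).sum)) • wd F (l.eraseIdx i)
      else 0

/-- `K`, the algebra automorphism of the free algebra `V` with `K(A) = q²A`, `K(B) = q⁻²B`;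
on a word `v = v₁⋯vₙ` it acts as `K(v) = v·q^{⟨v₁,A⟩+⋯+⟨vₙ,A⟩}`. -/
def Kop (q : F) : FA F →ₗ[F] FA F :=
  mkMap F fun l => (q ^ ((l.map (fun y => brk y lA)).sum)) • wd F l

/-- `K⁻¹`; on a word `v = v₁⋯vₙ` it acts as `K⁻¹(v) = v·q^{⟨v₁,B⟩+⋯+⟨vₙ,B⟩}`. -/
def Kinv (q : F) : FA F →ₗ[F] FA F :=
  mkMap F fun l => (q ^ ((l.map (fun y => brk y lB)).sum)) • wd F l

/-- `T`, the automorphism of the free algebra swapping `A` and `B`. -/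
def Top : FA F →ₗ[F] FA F :=
  mkMap F fun l => wd F (l.map (fun x => if x = lA then lB else lA))

/-- `Â = Q(A_L − K B_R)` and `B̂ = Q(B_L − K⁻¹ A_R)` where `Q = 1 - q²`. -/
def hatOp (q : F) (a : Ltr) : FA F →ₗ[F] FA F :=
  if a = lA then (1 - q ^ 2) • (AL F - Kop F q ∘ₗ BR F)
  else (1 - q ^ 2) • (BL F - Kinv F q ∘ₗ AR F)

def phiW (q : F) : List Ltr → FA F
  | [] => 1
  | a :: t => hatOp F q a (phiW q t)

/-- The map `φ`: `φ(1) = 1` and `φ(v₁⋯vₙ) = v̂₁v̂₂⋯v̂ₙ(1)`. -/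
def phi (q : F) : FA F →ₗ[F] FA F := mkMap F fun l => phiW F q l

/-- `ψ = K B_R A*_L + K⁻¹ A_R B*_L`. -/
def psi (q : F) : FA F →ₗ[F] FA F :=
  Kop F q ∘ₗ BR F ∘ₗ delL F lA + Kinv F q ∘ₗ AR F ∘ₗ delL F lB

/-- `V_n`, the span of the words of length `n`. -/
def Vn (n : ℕ) : Submodule F (FA F) :=
  Submodule.span F { x | ∃ l : List Ltr, l.length = n ∧ x = wd F l }

/-- `J⁺ = A³B − [3]_q A²BA + [3]_q ABA² − BA³`. -/
def Jp (q : F) : FA F :=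
  Agen F ^ 3 * Bgen F - tri F q • (Agen F ^ 2 * Bgen F * Agen F)
    + tri F q • (Agen F * Bgen F * Agen F ^ 2) - Bgen F * Agen F ^ 3

/-- `J⁻ = B³A − [3]_q B²AB + [3]_q BAB² − AB³`. -/
def Jm (q : F) : FA F :=
  Bgen F ^ 3 * Agen F - tri F q • (Bgen F ^ 2 * Agen F * Bgen F)
    + tri F q • (Bgen F * Agen F * Bgen F ^ 2) - Agen F * Bgen F ^ 3

/-- `J`, the two-sided ideal of the free algebra generated by `J⁺` and `J⁻`
(realized as the `F`-span of the elements `a·J^±·b`). -/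
def Jsub (q : F) : Submodule F (FA F) :=
  Submodule.span F { x | ∃ a b : FA F, x = a * Jp F q * b ∨ x = a * Jm F q * b }

/-- `U`, the subalgebra of the q-shuffle algebra `(V,⋆)` generated by `A` and `B`,
realized as the span of all `⋆`-products of the letters. -/
def Usub (q : F) : Submodule F (FA F) :=
  Submodule.span F (Set.range fun l : List Ltr => thetaW F q l)

/-- A `□_q`-module structure on an `F`-vector space `M`: four operators
`x₀, x₁, x₂, x₃` (indices mod 4) satisfying the q-Weyl and q-Serre relations. -/
structure SqAct (q : F) (M : Type*) [AddCommGroup M] [Module F M] where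
  x : ZMod 4 → Module.End F M
  weyl : ∀ i : ZMod 4,
    q • (x i * x (i + 1)) - q⁻¹ • (x (i + 1) * x i) = (q - q⁻¹) • (1 : Module.End F M)
  serre : ∀ i : ZMod 4,
    x i ^ 3 * x (i + 2) - tri F q • (x i ^ 2 * x (i + 2) * x i)
      + tri F q • (x i * x (i + 2) * x i ^ 2) - x (i + 2) * x i ^ 3 = 0

variable {F} {q : F} {M : Type*} [AddCommGroup M] [Module F M]

/-- A `□_q`-module `M` is generated by `ξ` if no proper submodule
(subspace invariant under all the `xᵢ`) contains `ξ`. -/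
def SqAct.Gen (S : SqAct F q M) (ξ : M) : Prop :=
  ∀ W : Submodule F M, (∀ i : ZMod 4, ∀ m ∈ W, S.x i m ∈ W) → ξ ∈ W → W = ⊤

/-- `W_n`: the span of the vectors `u₁u₂⋯uₙ·ξ` with each `uᵢ ∈ {x₀, x₂}`. -/
def SqAct.Wn (S : SqAct F q M) (ξ : M) (n : ℕ) : Submodule F M :=
  Submodule.span F
    { m | ∃ l : List (ZMod 4), l.length = n ∧ (∀ i ∈ l, i = 0 ∨ i = 2) ∧
        m = l.foldr (fun i acc => S.x i acc) ξ }

end SqPaper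

/-!
Write `Xop q x y = Q(x*_ℓ − y*_r K_x)` for a pair of distinct letters, so that `X₁ = Xop q A B`
and `X₃ = Xop q B A`. Peeling the first letter off a word shows that `Xop q x y` q-commutes with
left multiplication by either letter:
`Xop·x_L = q² x_L·Xop + (1 − q²)` and `y_L·Xop = q² Xop·y_L + (1 − q²)`.
These are the four q-Weyl relations. The same two rules alone force the q-Serre element `S` in
`X₁, X₃` to satisfy `S·a_L = q^{±4} a_L·S` for each letter `a`; since `S` kills the empty word,
which generates `V` under left multiplications, `S = 0`.
-/

namespace SqPaper

section QCommute

variable {F R : Type*} [Field F] [Ring R] [Algebra F R]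

def QComm (u : F) (a b : R) : Prop := b * a = u • (a * b) + (1 - u) • 1

def qSerre (t : F) (x y : R) : R :=
  x ^ 3 * y - t • (x ^ 2 * y * x) + t • (x * y * x ^ 2) - y * x ^ 3

theorem qWeyl_of_qComm {q : F} (hq : q ≠ 0) {a b : R} (h : QComm (q ^ 2) a b) :
    q • (a * b) - q⁻¹ • (b * a) = (q - q⁻¹) • 1 := by
  rw [h]
  match_scalars <;> field_simp <;> ring

theorem QComm.symm {u : F} (hu : u ≠ 0) {a b : R} (h : QComm u a b) : QComm u⁻¹ b a := by
  unfold QComm at *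
  rw [h]
  match_scalars <;> field_simp
  ring

theorem qSerre_mul_of_qComm {u : F} (hu : u ≠ 0) {x y a : R} (hx : QComm u a x)
    (hy : QComm u y a) :
    qSerre (u + 1 + u⁻¹) x y * a = u ^ 2 • (a * qSerre (u + 1 + u⁻¹) x y) := by
  have hx : x * a = u • (a * x) + (1 - u) • 1 := hx
  have hy : y * a = u⁻¹ • (a * y) + (1 - u⁻¹) • 1 := hy.symm hu
  have hx' (r : R) : x * (a * r) = u • (a * (x * r)) + (1 - u) • r := by
    rw [← mul_assoc, hx, add_mul, smul_mul_assoc, smul_mul_assoc, one_mul, mul_assoc]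
  have hy' (r : R) : y * (a * r) = u⁻¹ • (a * (y * r)) + (1 - u⁻¹) • r := by
    rw [← mul_assoc, hy, add_mul, smul_mul_assoc, smul_mul_assoc, one_mul, mul_assoc]
  simp only [qSerre, pow_succ, pow_zero, one_mul, sub_mul, add_mul, smul_mul_assoc, mul_assoc]
  simp only [hx, hy, hx', hy', mul_add, mul_sub, mul_smul_comm, smul_add, smul_sub, smul_smul,
    mul_one]
  match_scalars <;> field_simp <;> ring

end QCommute

variable {F : Type*} [Field F]

theorem mkMap_wd {M : Type*} [AddCommMonoid M] [Module F M] (f : List Ltr → M) (l : List Ltr) :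
    mkMap F f (wd F l) = f l := by
  simp [mkMap, wd, MonoidAlgebra.coeffLinearEquiv]

theorem wd_cons (a : Ltr) (l : List Ltr) : wd F (a :: l) = wd F [a] * wd F l := by
  rw [wd, wd, wd, MonoidAlgebra.single_mul_single, one_mul]
  rfl

theorem linearMap_ext_wd {M : Type*} [AddCommMonoid M] [Module F M] {f g : FA F →ₗ[F] M}
    (h : ∀ l, f (wd F l) = g (wd F l)) : f = g :=
  MonoidAlgebra.lhom_ext' fun w => LinearMap.ext_ring (h (FreeMonoid.toList w))

theorem lowL_wd_cons {q : F} (hq : q ≠ 0) (x a : Ltr) (l : List Ltr) :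
    lowL F q x (wd F (a :: l)) =
      (if a = x then wd F l else 0) + q ^ brk a x • (wd F [a] * lowL F q x (wd F l)) := by
  simp only [lowL, mkMap_wd, List.length_cons, Finset.sum_range_succ', Finset.mul_sum,
    Finset.smul_sum, List.getElem?_cons_succ, List.take_succ_cons, List.map_cons, List.sum_cons,
    List.eraseIdx_cons_succ, zpow_add₀ hq, mul_smul, ← wd_cons, mul_ite, smul_ite, mul_zero,
    smul_zero, mul_smul_comm, List.getElem?_cons_zero, Option.some.injEq, List.take_zero,
    List.map_nil, List.sum_nil, zpow_zero, one_smul, List.eraseIdx_cons_zero]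
  exact add_comm _ _

theorem lowR_wd_cons (q : F) (x a : Ltr) (l : List Ltr) :
    lowR F q x (wd F (a :: l)) =
      (if a = x then q ^ (l.map (brk · x)).sum • wd F l else 0) +
        wd F [a] * lowR F q x (wd F l) := by
  simp only [lowR, mkMap_wd, List.length_cons, Finset.sum_range_succ', Finset.mul_sum,
    List.getElem?_cons_succ, List.drop_succ_cons, List.eraseIdx_cons_succ, ← wd_cons, mul_ite,
    mul_zero, mul_smul_comm, List.getElem?_cons_zero, Option.some.injEq, List.drop_zero,
    List.eraseIdx_cons_zero]
  exact add_comm _ _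

theorem brk_self (x : Ltr) : brk x x = 2 := if_pos rfl

theorem brk_of_ne {x y : Ltr} (h : x ≠ y) : brk x y = -2 := if_neg h

theorem sum_brk_eq_neg {x y : Ltr} (h : y ≠ x) (l : List Ltr) :
    (l.map (brk · x)).sum = -(l.map (brk · y)).sum := by
  have hbrk : ∀ z, brk z x = -brk z y := by revert x y; decide
  induction l with
  | nil => simp
  | cons a t ih => simp only [List.map_cons, List.sum_cons, ih, hbrk a]; ring

def Kgen (q : F) (x : Ltr) : FA F →ₗ[F] FA F :=
  mkMap F fun l => q ^ (l.map (brk · x)).sum • wd F l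

theorem Kgen_wd (q : F) (x : Ltr) (l : List Ltr) :
    Kgen q x (wd F l) = q ^ (l.map (brk · x)).sum • wd F l :=
  mkMap_wd _ _

def Xop (q : F) (x y : Ltr) : FA F →ₗ[F] FA F :=
  (1 - q ^ 2) • (lowL F q x - lowR F q y ∘ₗ Kgen q x)

theorem Xop_wd_nil (q : F) (x y : Ltr) : Xop q x y (wd F []) = 0 := by
  simp [Xop, Kgen_wd, lowL, lowR, mkMap_wd]

theorem Xop_wd_cons_self {q : F} (hq : q ≠ 0) {x y : Ltr} (h : y ≠ x) (l : List Ltr) :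
    Xop q x y (wd F (x :: l)) = q ^ 2 • (wd F [x] * Xop q x y (wd F l)) + (1 - q ^ 2) • wd F l := by
  simp only [Xop, LinearMap.smul_apply, LinearMap.sub_apply, LinearMap.comp_apply, Kgen_wd,
    lowL_wd_cons hq, lowR_wd_cons, if_pos, if_neg (Ne.symm h), map_smul, List.map_cons,
    List.sum_cons, brk_self, zero_add, zpow_add₀ hq, mul_smul_comm, smul_sub, mul_sub,
    smul_add, smul_smul]
  match_scalars <;> simp only [zpow_ofNat] <;> ring

theorem Xop_wd_cons_other {q : F} (hq : q ≠ 0) {x y : Ltr} (h : y ≠ x) (l : List Ltr) :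
    wd F [y] * Xop q x y (wd F l) = q ^ 2 • Xop q x y (wd F (y :: l)) + (1 - q ^ 2) • wd F l := by
  simp only [Xop, LinearMap.smul_apply, LinearMap.sub_apply, LinearMap.comp_apply, Kgen_wd,
    lowL_wd_cons hq, lowR_wd_cons, if_pos, if_neg h, map_smul, List.map_cons,
    List.sum_cons, brk_of_ne h, zero_add, zpow_add₀ hq, sum_brk_eq_neg h l, mul_smul_comm,
    smul_sub, mul_sub, smul_add, smul_smul]
  match_scalars <;> simp only [zpow_neg, zpow_ofNat] <;> field_simp
  ring

theorem qComm_mulLeft_Xop {q : F} (hq : q ≠ 0) {x y : Ltr} (h : y ≠ x) :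
    QComm (q ^ 2) (LinearMap.mulLeft F (wd F [x])) (Xop q x y) := by
  refine linearMap_ext_wd fun l => ?_
  simp only [Module.End.mul_apply, LinearMap.add_apply, LinearMap.smul_apply,
    Module.End.one_apply, LinearMap.mulLeft_apply, ← wd_cons]
  exact Xop_wd_cons_self hq h l

theorem qComm_Xop_mulLeft {q : F} (hq : q ≠ 0) {x y : Ltr} (h : y ≠ x) :
    QComm (q ^ 2) (Xop q x y) (LinearMap.mulLeft F (wd F [y])) := by
  refine linearMap_ext_wd fun l => ?_
  simp only [Module.End.mul_apply, LinearMap.add_apply, LinearMap.smul_apply,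
    Module.End.one_apply, LinearMap.mulLeft_apply, ← wd_cons]
  exact Xop_wd_cons_other hq h l

theorem eq_zero_of_mul_mulLeft {S : Module.End F (FA F)} (hS : S (wd F []) = 0)
    (hmul : ∀ a : Ltr, ∃ c : F,
      S * LinearMap.mulLeft F (wd F [a]) = c • (LinearMap.mulLeft F (wd F [a]) * S)) :
    S = 0 := by
  refine linearMap_ext_wd fun l => ?_
  induction l with
  | nil => exact hS
  | cons a l ih =>
    obtain ⟨c, hc⟩ := hmul a
    calc S (wd F (a :: l)) = (S * LinearMap.mulLeft F (wd F [a])) (wd F l) := by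
          rw [wd_cons]; rfl
      _ = c • (wd F [a] * S (wd F l)) := by rw [hc]; rfl
      _ = 0 := by rw [ih, LinearMap.zero_apply, mul_zero, smul_zero]

theorem qSerre_Xop_eq_zero {q : F} (hq : q ≠ 0) {x y : Ltr} (h : y ≠ x) :
    qSerre (q ^ 2 + 1 + (q ^ 2)⁻¹) (Xop q x y) (Xop q y x) = 0 := by
  have hq2 : q ^ 2 ≠ 0 := pow_ne_zero 2 hq
  refine eq_zero_of_mul_mulLeft ?_ fun a => ?_
  · simp [qSerre, pow_succ, Xop_wd_nil]
  · obtain rfl | rfl : a = x ∨ a = y := by revert a x y; decide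
    · exact ⟨_, qSerre_mul_of_qComm hq2 (qComm_mulLeft_Xop hq h) (qComm_Xop_mulLeft hq h.symm)⟩
    · have ht : (q ^ 2)⁻¹ + 1 + (q ^ 2)⁻¹⁻¹ = q ^ 2 + 1 + (q ^ 2)⁻¹ := by rw [inv_inv]; ring
      have := qSerre_mul_of_qComm (inv_ne_zero hq2) ((qComm_Xop_mulLeft hq h).symm hq2)
        ((qComm_mulLeft_Xop hq h.symm).symm hq2)
      exact ⟨_, ht ▸ this⟩

theorem tri_eq {q : F} (hq : q ≠ 0) (hq2 : q ^ 2 ≠ 1) : tri F q = q ^ 2 + 1 + (q ^ 2)⁻¹ := by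
  have hsub : q - q⁻¹ ≠ 0 := by
    rw [sub_ne_zero]
    contrapose! hq2
    field_simp at hq2
    linear_combination hq2
  rw [tri, div_eq_iff hsub]
  field_simp
  ring

end SqPaper

open SqPaper in
/-- the operators `X₀ = A_L`, `X₁ = Q(A*_ℓ − B*_r K)`, `X₂ = B_L`,
`X₃ = Q(B*_ℓ − A*_r K⁻¹)` satisfy the q-Weyl relations, and `X₁, X₃` satisfy the
q-Serre relations (the `□^∨_q`-module `𝕍_I`). -/
theorem module_I_relations (F : Type*) [Field F] (q : F) (hq : q ≠ 0)
    (hq1 : ∀ k : ℕ, 0 < k → q ^ k ≠ 1) :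
    ∀ X : ZMod 4 → Module.End F (FA F),
      X 0 = AL F →
      X 1 = (1 - q ^ 2) • (lowL F q lA - lowR F q lB ∘ₗ Kop F q) →
      X 2 = BL F →
      X 3 = (1 - q ^ 2) • (lowL F q lB - lowR F q lA ∘ₗ Kinv F q) →
      (∀ i : ZMod 4,
        q • (X i * X (i + 1)) - q⁻¹ • (X (i + 1) * X i)
          = (q - q⁻¹) • (1 : Module.End F (FA F))) ∧
      X 1 ^ 3 * X 3 - tri F q • (X 1 ^ 2 * X 3 * X 1)
        + tri F q • (X 1 * X 3 * X 1 ^ 2) - X 3 * X 1 ^ 3 = 0 ∧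
      X 3 ^ 3 * X 1 - tri F q • (X 3 ^ 2 * X 1 * X 3)
        + tri F q • (X 3 * X 1 * X 3 ^ 2) - X 1 * X 3 ^ 3 = 0 := by
  intro X h0 h1 h2 h3
  have hX1 : X 1 = Xop q lA lB := h1
  have hX3 : X 3 = Xop q lB lA := h3
  have hBA : lB ≠ lA := by decide
  have c01 : QComm (q ^ 2) (X 0) (X 1) := by rw [h0, hX1]; exact qComm_mulLeft_Xop hq hBA
  have c12 : QComm (q ^ 2) (X 1) (X 2) := by rw [h2, hX1]; exact qComm_Xop_mulLeft hq hBA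
  have c23 : QComm (q ^ 2) (X 2) (X 3) := by rw [h2, hX3]; exact qComm_mulLeft_Xop hq hBA.symm
  have c30 : QComm (q ^ 2) (X 3) (X 0) := by rw [h0, hX3]; exact qComm_Xop_mulLeft hq hBA.symm
  have htri : tri F q = q ^ 2 + 1 + (q ^ 2)⁻¹ := tri_eq hq (hq1 2 two_pos)
  refine ⟨fun i => ?_, ?_, ?_⟩
  · obtain rfl | rfl | rfl | rfl : i = 0 ∨ i = 1 ∨ i = 2 ∨ i = 3 := by revert i; decide
    exacts [qWeyl_of_qComm hq c01, qWeyl_of_qComm hq c12, qWeyl_of_qComm hq c23,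
      qWeyl_of_qComm hq c30]
  · rw [hX1, hX3, htri]
    exact qSerre_Xop_eq_zero hq hBA
  · rw [hX1, hX3, htri]
    exact qSerre_Xop_eq_zero hq hBA.symm
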